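/- arXiv:1411.5748 — 16 statements merged into one kernel-verified Lean document; each statement's English description precedes it below -/
import Mathlib

section
/- For the generalized Fibonacci sequence F with F₀ = F₁ = 1 and Fₙ = i(Fₙ₋₁ + Fₙ₋₂) for n ≥ 2, one has the closed form F_{n+1} = (1/2)[(1 + 3√(i/(i+4)))·((i+√(i(i+4)))/2)ⁿ + (1 − 3√(i/(i+4)))·((i−√(i(i+4)))/2)ⁿ] for all n ≥ 0. -/
/-!
`G n := F (n + 1)` satisfies `G (n + 2) = i G (n + 1) + i G n` with `G 0 = 1`, `G 1 = 2i`.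
The roots of `t² = i t + i` are `(i ± √(i(i+4)))/2`, so the right-hand side is a solution of the same
recurrence, and it has the same initial values because `√(i/(i+4)) · √(i(i+4)) = i`.
-/

namespace LinearRecurrence

variable {R : Type*} [CommRing R]

def ofOrderTwo (a b : R) : LinearRecurrence R := ⟨2, ![b, a]⟩

theorem isSolution_ofOrderTwo_iff {a b : R} {u : ℕ → R} :
    (ofOrderTwo a b).IsSolution u ↔ ∀ n, u (n + 2) = a * u (n + 1) + b * u n := by
  change (∀ n, u (n + 2) = ∑ i : Fin 2, ![b, a] i * u (n + i)) ↔ _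
  simp [Fin.sum_univ_two, add_comm]

theorem isSolution_ofOrderTwo_pow {a b q : R} (hq : q ^ 2 = a * q + b) :
    (ofOrderTwo a b).IsSolution (q ^ ·) :=
  isSolution_ofOrderTwo_iff.2 fun n => by linear_combination q ^ n * hq

theorem isSolution_ofOrderTwo_linearCombination {a b p q : R} (hp : p ^ 2 = a * p + b)
    (hq : q ^ 2 = a * q + b) (c d : R) :
    (ofOrderTwo a b).IsSolution fun n => c * p ^ n + d * q ^ n := by
  simp only [is_sol_iff_mem_solSpace] at *
  exact add_mem (Submodule.smul_mem _ c (isSolution_ofOrderTwo_pow hp))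
    (Submodule.smul_mem _ d (isSolution_ofOrderTwo_pow hq))

theorem eq_of_isSolution_ofOrderTwo {a b : R} {u v : ℕ → R} (hu : (ofOrderTwo a b).IsSolution u)
    (hv : (ofOrderTwo a b).IsSolution v) (h0 : u 0 = v 0) (h1 : u 1 = v 1) : u = v := by
  refine ((ofOrderTwo a b).eq_iff_eqOn_range_order u v hu hv).2 fun n hn => ?_
  obtain rfl | rfl : n = 0 ∨ n = 1 := by simp [ofOrderTwo] at hn; omega
  exacts [h0, h1]

end LinearRecurrence

open LinearRecurrence

theorem add_sqrt_div_two_sq_of_sq_eq {x D : ℝ} (hD : D ^ 2 = x * (x + 4)) :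
    ((x + D) / 2) ^ 2 = x * ((x + D) / 2) + x := by
  linear_combination hD / 4

theorem Real.sqrt_div_mul_sqrt_mul {x y : ℝ} (hx : 0 ≤ x) (hy : 0 < y) :
    √(x / y) * √(x * y) = x := by
  rw [← Real.sqrt_mul (by positivity), show x / y * (x * y) = x ^ 2 by field_simp,
    Real.sqrt_sq hx]

theorem F_closed_form_general (i : ℕ) (F : ℕ → ℝ)
    (hF0 : F 0 = 1) (hF1 : F 1 = 1)
    (hF : ∀ n, 2 ≤ n → F n = i * (F (n - 1) + F (n - 2))) :
    ∀ n : ℕ, F (n + 1) =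
      (1 / 2) * ((1 + 3 * Real.sqrt (i / (i + 4))) * (((i : ℝ) + Real.sqrt (i * (i + 4))) / 2) ^ n
        + (1 - 3 * Real.sqrt (i / (i + 4))) * (((i : ℝ) - Real.sqrt (i * (i + 4))) / 2) ^ n) := by
  set x : ℝ := (i : ℝ)
  set D := √(x * (x + 4))
  set s := √(x / (x + 4))
  have hD : D ^ 2 = x * (x + 4) := Real.sq_sqrt (by positivity)
  have hsD : s * D = x := Real.sqrt_div_mul_sqrt_mul (by positivity) (by positivity)
  have hF_shift : (ofOrderTwo x x).IsSolution fun n => F (n + 1) :=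
    isSolution_ofOrderTwo_iff.2 fun n => (hF (n + 3) (by omega)).trans (mul_add _ _ _)
  have hclosed := isSolution_ofOrderTwo_linearCombination (add_sqrt_div_two_sq_of_sq_eq hD)
    (add_sqrt_div_two_sq_of_sq_eq (D := -D) (by rw [neg_sq, hD])) ((1 + 3 * s) / 2) ((1 - 3 * s) / 2)
  refine fun n => congrFun (eq_of_isSolution_ofOrderTwo hF_shift hclosed ?_ ?_) n |>.trans (by ring)
  · linear_combination hF1
  · have hF2 : F 2 = 2 * x := by
      rw [hF 2 le_rfl, Nat.sub_self, hF0, hF1]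
      ring
    linear_combination hF2 - 3 / 2 * hsD

theorem F_closed_form (i : ℕ) (hi : 2 ≤ i) (F : ℕ → ℝ)
    (hF0 : F 0 = 1) (hF1 : F 1 = 1)
    (hF : ∀ n, 2 ≤ n → F n = i * (F (n - 1) + F (n - 2))) :
    ∀ n : ℕ, F (n + 1) =
      (1 / 2) * ((1 + 3 * Real.sqrt (i / (i + 4))) * (((i : ℝ) + Real.sqrt (i * (i + 4))) / 2) ^ n
        + (1 - 3 * Real.sqrt (i / (i + 4))) * (((i : ℝ) - Real.sqrt (i * (i + 4))) / 2) ^ n) :=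
  F_closed_form_general i F hF0 hF1 hF
end

section
/- For the generalized Fibonacci sequence F (with F₀ = F₁ = 1, Fₙ = i(Fₙ₋₁+Fₙ₋₂)), we have F_{n+1}·F_{n−1} − Fₙ² = (2i−1)·(−i)^{n−1} for all n ≥ 1. -/
section Cassini

variable {R : Type*} [CommRing R] {c : R} {F : ℕ → R}

theorem cassini_succ (hF : ∀ n, F (n + 2) = c * (F (n + 1) + F n)) (n : ℕ) :
    F (n + 3) * F (n + 1) - F (n + 2) ^ 2 = -c * (F (n + 2) * F n - F (n + 1) ^ 2) := by
  linear_combination F (n + 1) * hF (n + 1) - F (n + 2) * hF n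

theorem cassini_eq_pow_mul (hF : ∀ n, F (n + 2) = c * (F (n + 1) + F n)) (n : ℕ) :
    F (n + 2) * F n - F (n + 1) ^ 2 = (-c) ^ n * (F 2 * F 0 - F 1 ^ 2) := by
  induction n with
  | zero => simp
  | succ n ih => rw [cassini_succ hF, ih]; ring

end Cassini

theorem F_catalan_identity_general (i : ℕ) (F : ℕ → ℝ)
    (hF0 : F 0 = 1) (hF1 : F 1 = 1)
    (hF : ∀ n, 2 ≤ n → F n = i * (F (n - 1) + F (n - 2))) :
    ∀ n : ℕ, 1 ≤ n → F (n + 1) * F (n - 1) - (F n) ^ 2 = (2 * (i : ℝ) - 1) * (-(i : ℝ)) ^ (n - 1) := by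
  have hrec : ∀ n, F (n + 2) = i * (F (n + 1) + F n) := fun n => by
    simpa using hF (n + 2) (by omega)
  rintro (_ | m) hm
  · omega
  simp only [Nat.add_sub_cancel]
  rw [cassini_eq_pow_mul hrec, hrec 0, hF0, hF1]
  ring

theorem F_catalan_identity (i : ℕ) (hi : 2 ≤ i) (F : ℕ → ℝ)
    (hF0 : F 0 = 1) (hF1 : F 1 = 1)
    (hF : ∀ n, 2 ≤ n → F n = i * (F (n - 1) + F (n - 2))) :
    ∀ n : ℕ, 1 ≤ n → F (n + 1) * F (n - 1) - (F n) ^ 2 = (2 * (i : ℝ) - 1) * (-(i : ℝ)) ^ (n - 1) :=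
  F_catalan_identity_general i F hF0 hF1 hF
end

section
/- For the generalized Fibonacci sequence F, we have Fₙ·Fₙ₋₁ − F_{n+1}·F_{n−2} = (2i−1)·(−i)^{n−1} for all n ≥ 2. -/
/-!
The Cassini-type determinant `F (n+2) F (n+1) - F (n+3) F n` of any sequence obeying
`F (n+2) = c (F (n+1) + F n)` gets multiplied by `-c` at each step: after expanding
`F (n+4)`, the two sides differ by `F (n+3)` times the recurrence at `n`. Hence it is
`(-c)^n` times its initial value, which is `-c (2c - 1)` when `F 0 = F 1 = 1`.
-/

section CassiniDeterminant

variable {R : Type*} [CommRing R] {c : R} {F : ℕ → R}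

theorem cassini_det_succ (hF : ∀ n, F (n + 2) = c * (F (n + 1) + F n)) (n : ℕ) :
    F (n + 3) * F (n + 2) - F (n + 4) * F (n + 1) =
      -c * (F (n + 2) * F (n + 1) - F (n + 3) * F n) := by
  linear_combination F (n + 3) * hF n - F (n + 1) * hF (n + 2)

theorem cassini_det_eq (hF : ∀ n, F (n + 2) = c * (F (n + 1) + F n)) (n : ℕ) :
    F (n + 2) * F (n + 1) - F (n + 3) * F n = (-c) ^ n * (F 2 * F 1 - F 3 * F 0) := by
  induction n with
  | zero => simp
  | succ n ih => rw [cassini_det_succ hF, ih, pow_succ']; ring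

end CassiniDeterminant

theorem F_identity_2_7_general (i : ℕ) (F : ℕ → ℝ)
    (hF0 : F 0 = 1) (hF1 : F 1 = 1)
    (hF : ∀ n, 2 ≤ n → F n = i * (F (n - 1) + F (n - 2))) :
    ∀ n : ℕ, 2 ≤ n → F n * F (n - 1) - F (n + 1) * F (n - 2) = (2 * (i : ℝ) - 1) * (-(i : ℝ)) ^ (n - 1) := by
  have hrec : ∀ n, F (n + 2) = i * (F (n + 1) + F n) := fun n => hF (n + 2) (by omega)
  have hF2 : F 2 = 2 * i := by rw [hrec, hF0, hF1]; ring
  have hF3 : F 3 = i * (2 * i + 1) := by rw [hrec, hF2, hF1]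
  intro n hn
  obtain ⟨m, rfl⟩ := Nat.exists_eq_add_of_le' hn
  simp only [Nat.add_sub_cancel, show m + 2 - 1 = m + 1 by omega]
  rw [cassini_det_eq hrec, hF0, hF1, hF2, hF3, pow_succ]
  ring

theorem F_identity_2_7 (i : ℕ) (hi : 2 ≤ i) (F : ℕ → ℝ)
    (hF0 : F 0 = 1) (hF1 : F 1 = 1)
    (hF : ∀ n, 2 ≤ n → F n = i * (F (n - 1) + F (n - 2))) :
    ∀ n : ℕ, 2 ≤ n → F n * F (n - 1) - F (n + 1) * F (n - 2) = (2 * (i : ℝ) - 1) * (-(i : ℝ)) ^ (n - 1) :=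
  F_identity_2_7_general i F hF0 hF1 hF
end

section
/- Let ω = (√(i(i+4)) − i)/(2i). For the generalized Fibonacci sequence F, the sequence F_{2n−1}/F_{2n} is strictly increasing with limit ω, and the sequence F_{2n}/F_{2n+1} is strictly decreasing with limit ω, as n → ∞. -/
/-!
Write `r n = F n / F (n + 1)`. The recurrence gives `r (n + 1) = 1 / (i (1 + r n))`, a decreasing
map whose positive fixed point is `ω`, and subtracting the fixed-point equation yields
`r (n + 1) - ω = -(ω / (1 + r n)) (r n - ω)` with `0 < ω / (1 + r n) ≤ ω < 1`. So the error
`r n - ω` alternates in sign and shrinks geometrically: the even-indexed ratios decrease to `ω`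
from above and the odd-indexed ones increase to `ω` from below.
-/

open Filter Topology

section AlternatingContraction

variable {x c : ℕ → ℝ} {a : ℝ}

theorem sub_add_two_eq_mul_mul_sub (hx : ∀ n, x (n + 1) - a = -(c n * (x n - a))) (n : ℕ) :
    x (n + 2) - a = c (n + 1) * c n * (x n - a) := by
  rw [hx (n + 1), hx n]
  ring

theorem lt_apply_two_mul (hx : ∀ n, x (n + 1) - a = -(c n * (x n - a))) (hc : ∀ n, 0 < c n)
    (h0 : a < x 0) (n : ℕ) : a < x (2 * n) := by
  induction n with
  | zero => simpa using h0
  | succ n ih =>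
    have hstep := sub_add_two_eq_mul_mul_sub hx (2 * n)
    have := mul_pos (mul_pos (hc (2 * n + 1)) (hc (2 * n))) (sub_pos.2 ih)
    rw [Nat.mul_succ]
    linarith

theorem apply_two_mul_add_one_lt (hx : ∀ n, x (n + 1) - a = -(c n * (x n - a)))
    (hc : ∀ n, 0 < c n) (h0 : a < x 0) (n : ℕ) : x (2 * n + 1) < a := by
  have := mul_pos (hc (2 * n)) (sub_pos.2 (lt_apply_two_mul hx hc h0 n))
  linarith [hx (2 * n)]

theorem strictAnti_apply_two_mul (hx : ∀ n, x (n + 1) - a = -(c n * (x n - a)))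
    (hc0 : ∀ n, 0 < c n) (hc1 : ∀ n, c n < 1) (h0 : a < x 0) :
    StrictAnti fun n => x (2 * n) := by
  refine strictAnti_nat_of_succ_lt fun n => ?_
  have hstep := sub_add_two_eq_mul_mul_sub hx (2 * n)
  have hpos := sub_pos.2 (lt_apply_two_mul hx hc0 h0 n)
  have hprod : c (2 * n + 1) * c (2 * n) < 1 :=
    mul_lt_one_of_nonneg_of_lt_one_left (hc0 _).le (hc1 _) (hc1 _).le
  have := mul_lt_mul_of_pos_right hprod hpos
  rw [Nat.mul_succ]
  linarith

theorem strictMono_apply_two_mul_add_one (hx : ∀ n, x (n + 1) - a = -(c n * (x n - a)))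
    (hc0 : ∀ n, 0 < c n) (hc1 : ∀ n, c n < 1) (h0 : a < x 0) :
    StrictMono fun n => x (2 * n + 1) := by
  refine strictMono_nat_of_lt_succ fun n => ?_
  have hstep := sub_add_two_eq_mul_mul_sub hx (2 * n + 1)
  have hneg := sub_neg.2 (apply_two_mul_add_one_lt hx hc0 h0 n)
  have hprod : c (2 * n + 2) * c (2 * n + 1) < 1 :=
    mul_lt_one_of_nonneg_of_lt_one_left (hc0 _).le (hc1 _) (hc1 _).le
  have := mul_lt_mul_of_neg_right hprod hneg
  rw [Nat.mul_succ]
  linarith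

theorem tendsto_of_sub_eq_neg_mul_sub {q : ℝ} (hx : ∀ n, x (n + 1) - a = -(c n * (x n - a)))
    (hc : ∀ n, |c n| ≤ q) (hq : q < 1) : Tendsto x atTop (𝓝 a) := by
  have hq0 : 0 ≤ q := (abs_nonneg _).trans (hc 0)
  have hbound : ∀ n, |x n - a| ≤ q ^ n * |x 0 - a| := by
    intro n
    induction n with
    | zero => simp
    | succ n ih =>
      calc |x (n + 1) - a| = |c n| * |x n - a| := by rw [hx, abs_neg, abs_mul]
        _ ≤ q * (q ^ n * |x 0 - a|) := mul_le_mul (hc n) ih (abs_nonneg _) hq0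
        _ = q ^ (n + 1) * |x 0 - a| := by ring
  have hgeom : Tendsto (fun n => q ^ n * |x 0 - a|) atTop (𝓝 0) := by
    simpa using (tendsto_pow_atTop_nhds_zero_of_lt_one hq0 hq).mul_const |x 0 - a|
  rw [tendsto_iff_norm_sub_tendsto_zero]
  exact squeeze_zero (fun n => norm_nonneg _) (fun n => (Real.norm_eq_abs _).trans_le (hbound n))
    hgeom

end AlternatingContraction

theorem pos_of_add_two_eq_mul_add {i : ℝ} {F : ℕ → ℝ} (hi : 0 < i) (hF0 : 0 < F 0)
    (hF1 : 0 < F 1) (hF : ∀ n, F (n + 2) = i * (F (n + 1) + F n)) (n : ℕ) : 0 < F n := by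
  induction n using Nat.twoStepInduction with
  | zero => exact hF0
  | one => exact hF1
  | more n ih0 ih1 => rw [hF n]; positivity

theorem div_add_two_eq_inv_mul_one_add {i : ℝ} {F : ℕ → ℝ}
    (hF : ∀ n, F (n + 2) = i * (F (n + 1) + F n)) (hpos : ∀ n, 0 < F n) (n : ℕ) :
    F (n + 1) / F (n + 2) = (i * (1 + F n / F (n + 1)))⁻¹ := by
  have := hpos n
  have := hpos (n + 1)
  rw [hF]
  field_simp

theorem inv_mul_one_add_sub_eq {i ω y : ℝ} (hi : i ≠ 0) (hy : 1 + y ≠ 0)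
    (hω : i * ω * (1 + ω) = 1) : (i * (1 + y))⁻¹ - ω = -(ω / (1 + y) * (y - ω)) := by
  field_simp
  linear_combination -hω

theorem sqrt_sub_div_pos_and_fixed {i ω : ℝ} (hi : 0 < i)
    (hω : ω = (Real.sqrt (i * (i + 4)) - i) / (2 * i)) : 0 < ω ∧ i * ω * (1 + ω) = 1 := by
  have hs : Real.sqrt (i * (i + 4)) ^ 2 = i * (i + 4) := Real.sq_sqrt (by positivity)
  have hgt : i < Real.sqrt (i * (i + 4)) := by
    nlinarith [Real.sqrt_nonneg (i * (i + 4))]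
  have hsqrt : Real.sqrt (i * (i + 4)) = 2 * i * ω + i := by
    rw [hω]; field_simp; ring
  refine ⟨hω ▸ div_pos (by linarith) (by positivity), ?_⟩
  rw [hsqrt] at hs
  have : 4 * i * (i * ω * (1 + ω) - 1) = 0 := by linear_combination hs
  have := (mul_eq_zero.1 this).resolve_left (by positivity)
  linarith

theorem lt_one_of_mul_mul_one_add_eq_one {i ω : ℝ} (hi : 1 ≤ i) (hω0 : 0 < ω)
    (hω : i * ω * (1 + ω) = 1) : ω < 1 := by
  nlinarith [mul_pos hω0 hω0]

theorem F_ratio_monotone_to_omega (i : ℕ) (hi : 2 ≤ i) (F : ℕ → ℝ)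
    (hF0 : F 0 = 1) (hF1 : F 1 = 1)
    (hF : ∀ n, 2 ≤ n → F n = i * (F (n - 1) + F (n - 2)))
    (ω : ℝ) (hω : ω = (Real.sqrt (i * (i + 4)) - i) / (2 * i)) :
    StrictMono (fun n : ℕ => F (2 * (n + 1) - 1) / F (2 * (n + 1))) ∧
    Filter.Tendsto (fun n : ℕ => F (2 * (n + 1) - 1) / F (2 * (n + 1))) Filter.atTop (nhds ω) ∧
    StrictAnti (fun n : ℕ => F (2 * n) / F (2 * n + 1)) ∧
    Filter.Tendsto (fun n : ℕ => F (2 * n) / F (2 * n + 1)) Filter.atTop (nhds ω) := by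
  have hi0 : (0 : ℝ) < i := by positivity
  obtain ⟨hω0, hωfix⟩ := sqrt_sub_div_pos_and_fixed hi0 hω
  have hω1 := lt_one_of_mul_mul_one_add_eq_one (by exact_mod_cast one_le_two.trans hi) hω0 hωfix
  have hrec (n : ℕ) : F (n + 2) = i * (F (n + 1) + F n) := by simpa using hF (n + 2) (by omega)
  have hFpos := pos_of_add_two_eq_mul_add hi0 (by simp [hF0]) (by simp [hF1]) hrec
  set r : ℕ → ℝ := fun n => F n / F (n + 1) with hr
  have hrpos (n : ℕ) : 0 < r n := div_pos (hFpos n) (hFpos (n + 1))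
  have hr1 (n : ℕ) : 0 < 1 + r n := by linarith [hrpos n]
  have hstep (n : ℕ) : r (n + 1) - ω = -(ω / (1 + r n) * (r n - ω)) := by
    rw [← inv_mul_one_add_sub_eq hi0.ne' (hr1 n).ne' hωfix]
    exact congrArg (· - ω) (div_add_two_eq_inv_mul_one_add hrec hFpos n)
  have hc0 (n : ℕ) : 0 < ω / (1 + r n) := div_pos hω0 (hr1 n)
  have hcω (n : ℕ) : ω / (1 + r n) ≤ ω := div_le_self hω0.le (by linarith [hrpos n])
  have hc1 (n : ℕ) : ω / (1 + r n) < 1 := (hcω n).trans_lt hω1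
  have hr0 : ω < r 0 := by simpa [hr, hF0, hF1] using hω1
  have hlim := tendsto_of_sub_eq_neg_mul_sub hstep
    (fun n => (abs_of_pos (hc0 n)).trans_le (hcω n)) hω1
  have hodd : (fun n : ℕ => F (2 * (n + 1) - 1) / F (2 * (n + 1))) = fun n => r (2 * n + 1) := by
    funext n
    simp only [hr, show 2 * (n + 1) - 1 = 2 * n + 1 by omega]
    rfl
  have hdouble : StrictMono fun n : ℕ => 2 * n := strictMono_mul_left_of_pos two_pos
  rw [hodd]
  exact ⟨strictMono_apply_two_mul_add_one hstep hc0 hc1 hr0,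
    hlim.comp (hdouble.add_const 1).tendsto_atTop,
    strictAnti_apply_two_mul hstep hc0 hc1 hr0, hlim.comp hdouble.tendsto_atTop⟩
end

section
/- Let ω = (√(i(i+4)) − i)/(2i). For the generalized Fibonacci sequence F, the sequence F_{2n−1}/F_{2n+1} is strictly increasing with limit ω², and F_{2n}/F_{2n+2} is strictly decreasing with limit ω², as n → ∞. -/
/-!
Write `c = i`. The identity `F (m + 2) ^ 2 - F m * F (m + 4) = c ^ 2 (-c) ^ m (1 - 2c)`, a two-step
Cassini identity, has the sign of `(-1) ^ (m + 1)`, which makes `F m / F (m + 2)` increase along odd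
`m` and decrease along even `m`. The characteristic roots of `x ^ 2 = c x + c` are
`α = (c + √(c (c + 4))) / 2` and `β = (c - √(c (c + 4))) / 2`, with `|β| < α`, so Binet's formula gives
`F m ~ A α ^ m` with `A > 0`, hence `F m / F (m + 2) → α⁻¹ ^ 2`, and `α⁻¹ = ω`.
-/

open Filter Topology

section LinearRecurrence

variable {c : ℝ} {F : ℕ → ℝ}

theorem cassini_of_rec (hrec : ∀ n, F (n + 2) = c * (F (n + 1) + F n)) (n : ℕ) :
    F (n + 1) ^ 2 - F n * F (n + 2) = (-c) ^ n * (F 1 ^ 2 - F 0 * F 2) := by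
  induction n with
  | zero => ring
  | succ n ih =>
    linear_combination (-c) * ih + F (n + 2) * hrec n - F (n + 1) * hrec (n + 1)

theorem sq_sub_mul_add_four_of_rec (hrec : ∀ n, F (n + 2) = c * (F (n + 1) + F n)) (n : ℕ) :
    F (n + 2) ^ 2 - F n * F (n + 4) = c ^ 2 * (-c) ^ n * (F 1 ^ 2 - F 0 * F 2) := by
  linear_combination c ^ 2 * cassini_of_rec hrec n + (F (n + 2) + c * F (n + 1)) * hrec n
    - (c * F n) * hrec (n + 1) - F n * hrec (n + 2)

theorem pos_of_rec (hrec : ∀ n, F (n + 2) = c * (F (n + 1) + F n)) (hc : 0 < c)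
    (h0 : 0 < F 0) (h1 : 0 < F 1) (n : ℕ) : 0 < F n := by
  induction n using Nat.twoStepInduction with
  | zero => exact h0
  | one => exact h1
  | more n ih ih' => rw [hrec]; positivity

theorem div_add_two_sub_div {m : ℕ} (h2 : F (m + 2) ≠ 0) (h4 : F (m + 4) ≠ 0) :
    F (m + 2) / F (m + 4) - F m / F (m + 2) =
      (F (m + 2) ^ 2 - F m * F (m + 4)) / (F (m + 2) * F (m + 4)) := by
  field_simp

theorem strictMono_odd_div_add_two (hrec : ∀ n, F (n + 2) = c * (F (n + 1) + F n)) (hc : 0 < c)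
    (hpos : ∀ n, 0 < F n) (hd : F 1 ^ 2 - F 0 * F 2 < 0) :
    StrictMono fun n : ℕ => F (2 * n + 1) / F (2 * n + 1 + 2) := by
  refine strictMono_nat_of_lt_succ fun n => sub_pos.1
    (?_ : 0 < F (2 * n + 1 + 2) / F (2 * n + 1 + 4) - F (2 * n + 1) / F (2 * n + 1 + 2))
  have hodd : (-c) ^ (2 * n + 1) = -c ^ (2 * n + 1) := Odd.neg_pow ⟨n, rfl⟩ c
  have hnum : 0 < F (2 * n + 1 + 2) ^ 2 - F (2 * n + 1) * F (2 * n + 1 + 4) := by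
    rw [sq_sub_mul_add_four_of_rec hrec, hodd]
    have : 0 < c ^ 2 * c ^ (2 * n + 1) := by positivity
    nlinarith
  rw [div_add_two_sub_div (hpos _).ne' (hpos _).ne']
  exact div_pos hnum (mul_pos (hpos _) (hpos _))

theorem strictAnti_even_div_add_two (hrec : ∀ n, F (n + 2) = c * (F (n + 1) + F n)) (hc : 0 < c)
    (hpos : ∀ n, 0 < F n) (hd : F 1 ^ 2 - F 0 * F 2 < 0) :
    StrictAnti fun n : ℕ => F (2 * n) / F (2 * n + 2) := by
  refine strictAnti_nat_of_succ_lt fun n => sub_neg.1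
    (?_ : F (2 * n + 2) / F (2 * n + 4) - F (2 * n) / F (2 * n + 2) < 0)
  have heven : (-c) ^ (2 * n) = c ^ (2 * n) := Even.neg_pow ⟨n, two_mul n⟩ c
  have hnum : F (2 * n + 2) ^ 2 - F (2 * n) * F (2 * n + 4) < 0 := by
    rw [sq_sub_mul_add_four_of_rec hrec, heven]
    have : 0 < c ^ 2 * c ^ (2 * n) := by positivity
    nlinarith
  rw [div_add_two_sub_div (hpos _).ne' (hpos _).ne']
  exact div_neg_of_neg_of_pos hnum (mul_pos (hpos _) (hpos _))

theorem eq_binet_of_rec (hrec : ∀ n, F (n + 2) = c * (F (n + 1) + F n)) {α β : ℝ}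
    (hα : α ^ 2 = c * α + c) (hβ : β ^ 2 = c * β + c) (hαβ : α ≠ β) (n : ℕ) :
    F n = (F 1 - β * F 0) / (α - β) * α ^ n + (α * F 0 - F 1) / (α - β) * β ^ n := by
  have hne : α - β ≠ 0 := sub_ne_zero.2 hαβ
  induction n using Nat.twoStepInduction with
  | zero => field_simp; ring
  | one => field_simp; ring
  | more n ih ih' =>
    rw [hrec, ih, ih']
    linear_combination (-((F 1 - β * F 0) / (α - β) * α ^ n)) * hα
      - (α * F 0 - F 1) / (α - β) * β ^ n * hβ

theorem tendsto_div_pow_of_eq_add {A B α β : ℝ} (hF : ∀ n, F n = A * α ^ n + B * β ^ n)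
    (hβα : |β| < |α|) : Tendsto (fun n => F n / α ^ n) atTop (𝓝 A) := by
  have hα : α ≠ 0 := abs_pos.1 ((abs_nonneg β).trans_lt hβα)
  have hq : Tendsto (fun n : ℕ => (β / α) ^ n) atTop (𝓝 0) :=
    tendsto_pow_atTop_nhds_zero_of_abs_lt_one (by rwa [abs_div, div_lt_one (abs_pos.2 hα)])
  have hlim := (hq.const_mul B).const_add A
  rw [mul_zero, add_zero] at hlim
  refine hlim.congr fun n => ?_
  rw [hF, div_pow]
  field_simp

theorem tendsto_div_add_two_of_tendsto_div_pow {A α : ℝ}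
    (h : Tendsto (fun n => F n / α ^ n) atTop (𝓝 A)) (hA : A ≠ 0) (hα : α ≠ 0) :
    Tendsto (fun n => F n / F (n + 2)) atTop (𝓝 (α⁻¹ ^ 2)) := by
  have h2 := (tendsto_add_atTop_iff_nat 2).2 h
  have hlim := (h.div h2 hA).mul_const (α⁻¹ ^ 2)
  rw [div_self hA, one_mul] at hlim
  refine hlim.congr fun n => ?_
  simp only [Pi.div_apply, pow_add]
  field_simp

theorem tendsto_div_add_two_of_rec (hrec : ∀ n, F (n + 2) = c * (F (n + 1) + F n)) (hc : 0 < c)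
    (h0 : 0 < F 0) (h1 : 0 < F 1) :
    Tendsto (fun n => F n / F (n + 2)) atTop (𝓝 (((√(c * (c + 4)) - c) / (2 * c)) ^ 2)) := by
  set s := √(c * (c + 4))
  have hs2 : s ^ 2 = c * (c + 4) := Real.sq_sqrt (by positivity)
  have hcs : c < s := by nlinarith [Real.sqrt_nonneg (c * (c + 4))]
  have hα : ((c + s) / 2) ^ 2 = c * ((c + s) / 2) + c := by linear_combination hs2 / 4
  have hβ : ((c - s) / 2) ^ 2 = c * ((c - s) / 2) + c := by linear_combination hs2 / 4
  have hβα : |(c - s) / 2| < |(c + s) / 2| := by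
    rw [abs_of_neg (by linarith), abs_of_pos (by linarith)]
    linarith
  have hA : 0 < (F 1 - (c - s) / 2 * F 0) / ((c + s) / 2 - (c - s) / 2) := by
    apply div_pos <;> nlinarith
  have hω : ((c + s) / 2)⁻¹ = (s - c) / (2 * c) := by
    have : c + s ≠ 0 := by linarith
    field_simp
    linear_combination -hs2
  rw [← hω]
  exact tendsto_div_add_two_of_tendsto_div_pow
    (tendsto_div_pow_of_eq_add (eq_binet_of_rec hrec hα hβ (by linarith)) hβα) hA.ne'
    (by linarith)

end LinearRecurrence

theorem F_ratio_monotone_to_omega_sq (i : ℕ) (hi : 2 ≤ i) (F : ℕ → ℝ)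
    (hF0 : F 0 = 1) (hF1 : F 1 = 1)
    (hF : ∀ n, 2 ≤ n → F n = i * (F (n - 1) + F (n - 2)))
    (ω : ℝ) (hω : ω = (Real.sqrt (i * (i + 4)) - i) / (2 * i)) :
    StrictMono (fun n : ℕ => F (2 * (n + 1) - 1) / F (2 * (n + 1) + 1)) ∧
    Filter.Tendsto (fun n : ℕ => F (2 * (n + 1) - 1) / F (2 * (n + 1) + 1)) Filter.atTop (nhds (ω ^ 2)) ∧
    StrictAnti (fun n : ℕ => F (2 * n) / F (2 * n + 2)) ∧
    Filter.Tendsto (fun n : ℕ => F (2 * n) / F (2 * n + 2)) Filter.atTop (nhds (ω ^ 2)) := by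
  have hrec : ∀ n, F (n + 2) = i * (F (n + 1) + F n) := fun n => hF (n + 2) (by omega)
  have hi' : (2 : ℝ) ≤ i := by exact_mod_cast hi
  have hpos := pos_of_rec hrec (by linarith) (hF0 ▸ one_pos) (hF1 ▸ one_pos)
  have hd : F 1 ^ 2 - F 0 * F 2 < 0 := by
    rw [hrec 0, hF0, hF1]
    linarith
  have hlim := tendsto_div_add_two_of_rec hrec (by linarith) (hpos 0) (hpos 1)
  rw [← hω] at hlim
  have hodd : (fun n : ℕ => F (2 * (n + 1) - 1) / F (2 * (n + 1) + 1)) =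
      fun n => F (2 * n + 1) / F (2 * n + 1 + 2) := by
    funext n
    rw [show 2 * (n + 1) - 1 = 2 * n + 1 by omega, show 2 * (n + 1) + 1 = 2 * n + 1 + 2 by omega]
  rw [hodd]
  exact ⟨strictMono_odd_div_add_two hrec (by linarith) hpos hd,
    hlim.comp (StrictMono.tendsto_atTop fun _ _ h => by omega),
    strictAnti_even_div_add_two hrec (by linarith) hpos hd,
    hlim.comp (StrictMono.tendsto_atTop fun _ _ h => by omega)⟩
end

section
/- For the G-sequence, Gₙ·Gₘ − G_{n+1}·G_{m−1} = (−i)^m · G_{n−m} holds whenever n + 1 ≥ m ≥ 0. -/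
/-!
Expanding `G (k+1)` and `G (n+1)` by the recurrence shows that the cross difference
`D(n, k) = G n G k - G (n+1) G (k-1)` satisfies `D(n, k+1) = -i D(n-1, k)`.
Hence `D(n, m) = (-i)^m D(n-m, 0)`, and `D(n-m, 0) = G (n-m)` by the initial values.
-/

section LinearRecurrence

variable {R : Type*} [CommRing R] {a : R} {G : ℤ → R}

theorem cross_diff_succ (hG : ∀ n : ℤ, 1 ≤ n → G n = a * (G (n - 1) + G (n - 2)))
    {n k : ℤ} (hn : 0 ≤ n) (hk : 0 ≤ k) :
    G n * G (k + 1) - G (n + 1) * G k = -a * (G (n - 1) * G k - G n * G (k - 1)) := by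
  have step : ∀ j : ℤ, 0 ≤ j → G (j + 1) = a * (G j + G (j - 1)) := fun j hj => by
    rw [hG (j + 1) (by omega), add_sub_cancel_right, show j + 1 - 2 = j - 1 by ring]
  rw [step k hk, step n hn]
  ring

theorem cross_diff_eq_neg_pow_mul (hG : ∀ n : ℤ, 1 ≤ n → G n = a * (G (n - 1) + G (n - 2)))
    (k : ℕ) {n : ℤ} (hkn : k ≤ n + 1) :
    G n * G k - G (n + 1) * G (k - 1) =
      (-a) ^ k * (G (n - k) * G 0 - G (n - k + 1) * G (-1)) := by
  induction k generalizing n with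
  | zero => simp
  | succ k ih =>
    have ih' := ih (n := n - 1) (by omega)
    rw [sub_add_cancel] at ih'
    push_cast
    rw [add_sub_cancel_right, cross_diff_succ hG (by omega) (by omega), ih',
      show n - (k + 1 : ℤ) = n - 1 - k by ring]
    ring

end LinearRecurrence

theorem G_identity_2_12_general (i : ℕ) (G : ℤ → ℝ)
    (hGm1 : G (-1) = 0) (hG0 : G 0 = 1)
    (hG : ∀ n : ℤ, 1 ≤ n → G n = i * (G (n - 1) + G (n - 2))) :
    ∀ n m : ℤ, 0 ≤ m → m ≤ n + 1 →
      G n * G m - G (n + 1) * G (m - 1) = (-(i : ℝ)) ^ m * G (n - m) := by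
  intro n m hm hmn
  obtain ⟨k, rfl⟩ := Int.eq_ofNat_of_zero_le hm
  rw [cross_diff_eq_neg_pow_mul hG k hmn, hG0, hGm1, zpow_natCast]
  ring

theorem G_identity_2_12 (i : ℕ) (hi : 2 ≤ i) (G : ℤ → ℝ)
    (hGm1 : G (-1) = 0) (hG0 : G 0 = 1)
    (hG : ∀ n : ℤ, 1 ≤ n → G n = i * (G (n - 1) + G (n - 2))) :
    ∀ n m : ℤ, 0 ≤ m → m ≤ n + 1 →
      G n * G m - G (n + 1) * G (m - 1) = (-(i : ℝ)) ^ m * G (n - m) :=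
  G_identity_2_12_general i G hGm1 hG0 hG
end

section
/- For the G-sequence, Gₙ·Gₘ − G_{n+2}·G_{m−2} = −(−i)^m · G_{n−m+1} holds whenever n + 1 ≥ m ≥ 1. -/
/-!
Put `D(n, k) = G n * G k - G (n + 1) * G (k - 1)`. Expanding `G (k + 1)` and `G (n + 1)` by the
recurrence gives `D(n, k + 1) = -c * D(n - 1, k)`, and `D(n, 0) = G n`, so
`D(n, k) = (-c) ^ k * G (n - k)` (a d'Ocagne-type identity). One more use of the recurrence turns
the left-hand side of the theorem, for `m = k + 1`, into `c * D(n, k)`.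
-/

section Recurrence

variable {R : Type*} [CommRing R] {c : R} {G : ℤ → R}

theorem G_succ_eq (hG : ∀ n : ℤ, 1 ≤ n → G n = c * (G (n - 1) + G (n - 2)))
    {n : ℤ} (hn : 0 ≤ n) : G (n + 1) = c * (G n + G (n - 1)) := by
  rw [hG (n + 1) (by omega), add_sub_cancel_right, show n + 1 - 2 = n - 1 by ring]

theorem G_dOcagne (hGm1 : G (-1) = 0) (hG0 : G 0 = 1)
    (hG : ∀ n : ℤ, 1 ≤ n → G n = c * (G (n - 1) + G (n - 2))) (k : ℕ) {n : ℤ}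
    (hkn : (k : ℤ) ≤ n + 1) :
    G n * G k - G (n + 1) * G (k - 1) = (-c) ^ k * G (n - k) := by
  induction k generalizing n with
  | zero => simp [hGm1, hG0]
  | succ k ih =>
    push_cast at hkn ⊢
    have hprev := ih (n := n - 1) (by omega)
    rw [sub_add_cancel, show n - 1 - k = n - (k + 1) by ring] at hprev
    rw [add_sub_cancel_right, G_succ_eq hG (Int.natCast_nonneg k),
      G_succ_eq hG (show 0 ≤ n by omega), pow_succ]
    linear_combination (-c) * hprev

theorem G_mul_sub_G_add_two_mul (hGm1 : G (-1) = 0) (hG0 : G 0 = 1)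
    (hG : ∀ n : ℤ, 1 ≤ n → G n = c * (G (n - 1) + G (n - 2))) {m : ℕ} (hm : 1 ≤ m) {n : ℤ}
    (hmn : (m : ℤ) ≤ n + 1) :
    G n * G m - G (n + 2) * G (m - 2) = -(-c) ^ m * G (n - m + 1) := by
  obtain ⟨k, rfl⟩ : ∃ k, m = k + 1 := ⟨m - 1, by omega⟩
  push_cast at hmn ⊢
  have hn2 : G (n + 2) = c * (G (n + 1) + G n) := by
    rw [show n + 2 = n + 1 + 1 by ring, G_succ_eq hG (show 0 ≤ n + 1 by omega),
      add_sub_cancel_right]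
  rw [show (k : ℤ) + 1 - 2 = k - 1 by ring, show n - (k + 1) + 1 = n - k by ring,
    G_succ_eq hG (Int.natCast_nonneg k), hn2, pow_succ]
  linear_combination c * G_dOcagne hGm1 hG0 hG k (n := n) (by omega)

end Recurrence

theorem G_identity_2_13_general (i : ℕ) (G : ℤ → ℝ)
    (hGm1 : G (-1) = 0) (hG0 : G 0 = 1)
    (hG : ∀ n : ℤ, 1 ≤ n → G n = i * (G (n - 1) + G (n - 2))) :
    ∀ n m : ℤ, 1 ≤ m → m ≤ n + 1 →
      G n * G m - G (n + 2) * G (m - 2) = -(-(i : ℝ)) ^ m * G (n - m + 1) := by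
  intro n m hm hmn
  lift m to ℕ using (by omega)
  rw [zpow_natCast]
  exact G_mul_sub_G_add_two_mul hGm1 hG0 hG (by omega) hmn

theorem G_identity_2_13 (i : ℕ) (hi : 2 ≤ i) (G : ℤ → ℝ)
    (hGm1 : G (-1) = 0) (hG0 : G 0 = 1)
    (hG : ∀ n : ℤ, 1 ≤ n → G n = i * (G (n - 1) + G (n - 2))) :
    ∀ n m : ℤ, 1 ≤ m → m ≤ n + 1 →
      G n * G m - G (n + 2) * G (m - 2) = -(-(i : ℝ)) ^ m * G (n - m + 1) :=
  G_identity_2_13_general i G hGm1 hG0 hG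
end

section
/- Let a, b, c, d be positive reals and n ≥ m ≥ 0 integers. Then (a·Gₘ + b·Gₘ₋₁)/(a·G_{n+1} + b·Gₙ) < (c·Gₘ + d·Gₘ₋₁)/(c·G_{n+1} + d·Gₙ) if and only if (−1)^m (ad − bc) < 0; similarly for > and =. -/
/-!
Cross-multiplying, the difference of the two sides of the comparison is
`(a d - b c) (G m G n - G (m-1) G (n+1))` over a positive denominator, and the Cassini-type
identity `G m G n - G (m-1) G (n+1) = (-i)^m G (n-m)` for the recurrence makes its sign that
of `(-1)^m (a d - b c)`, since `G` is positive on `ℕ`.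
-/

theorem div_comparison_iff_of_cross_sub {u v B D s P : ℝ} (hB : 0 < B) (hD : 0 < D) (hP : 0 < P)
    (hcross : u * D - v * B = s * P) :
    (u / B < v / D ↔ s < 0) ∧ (u / B > v / D ↔ s > 0) ∧ (u / B = v / D ↔ s = 0) := by
  refine ⟨?_, ?_, ?_⟩
  · rw [div_lt_div_iff₀ hB hD, ← sub_neg, hcross]
    simpa using mul_lt_mul_iff_left₀ (b := s) (c := 0) hP
  · rw [gt_iff_lt, div_lt_div_iff₀ hD hB, ← sub_pos, hcross, mul_pos_iff_of_pos_right hP]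
  · rw [div_eq_div_iff hB.ne' hD.ne', ← sub_eq_zero, hcross, mul_eq_zero, or_iff_left hP.ne']

section LinearRecurrence

variable {r : ℝ} {G : ℤ → ℝ}

theorem pos_of_linear_recurrence (hr : 0 < r) (hGm1 : 0 ≤ G (-1)) (hG0 : 0 < G 0)
    (hG : ∀ n : ℤ, 1 ≤ n → G n = r * (G (n - 1) + G (n - 2))) {k : ℤ} (hk : 0 ≤ k) :
    0 < G k := by
  suffices h : 0 < G k ∧ 0 ≤ G (k - 1) from h.1
  induction k, hk using Int.leInduction with
  | base => exact ⟨hG0, hGm1⟩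
  | succ k hk ih =>
    rw [hG (k + 1) (by omega), add_sub_cancel_right, show k + 1 - 2 = k - 1 by ring]
    exact ⟨mul_pos hr (add_pos_of_pos_of_nonneg ih.1 ih.2), ih.1.le⟩

theorem cassini_of_linear_recurrence
    (hG : ∀ n : ℤ, 1 ≤ n → G n = r * (G (n - 1) + G (n - 2))) (p : ℕ) {n : ℤ} (hpn : p ≤ n) :
    G p * G n - G (p - 1) * G (n + 1)
      = (-r) ^ p * (G 0 * G (n - p) - G (-1) * G (n - p + 1)) := by
  induction p generalizing n with
  | zero => simp
  | succ p ih =>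
    have hp := hG (p + 1) (by omega)
    have hn := hG (n + 1) (by omega)
    have h := ih (n := n - 1) (by omega)
    push_cast
    rw [show (p : ℤ) + 1 - 1 = p by ring, show (p : ℤ) + 1 - 2 = p - 1 by ring] at hp
    rw [show n + 1 - 1 = n by ring, show n + 1 - 2 = n - 1 by ring] at hn
    rw [show n - 1 + 1 = n by ring, show n - 1 - p = n - (p + 1) by ring] at h
    rw [add_sub_cancel_right, hp, hn, pow_succ]
    linear_combination (-r) * h

end LinearRecurrence

theorem G_ratio_comparison (i : ℕ) (hi : 2 ≤ i) (G : ℤ → ℝ)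
    (hGm1 : G (-1) = 0) (hG0 : G 0 = 1)
    (hG : ∀ n : ℤ, 1 ≤ n → G n = i * (G (n - 1) + G (n - 2)))
    (a b c d : ℝ) (ha : 0 < a) (hb : 0 < b) (hc : 0 < c) (hd : 0 < d)
    (n m : ℤ) (hm : 0 ≤ m) (hnm : m ≤ n) :
    ((a * G m + b * G (m - 1)) / (a * G (n + 1) + b * G n)
        < (c * G m + d * G (m - 1)) / (c * G (n + 1) + d * G n)
      ↔ (-1 : ℝ) ^ m * (a * d - b * c) < 0) ∧
    ((a * G m + b * G (m - 1)) / (a * G (n + 1) + b * G n)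
        > (c * G m + d * G (m - 1)) / (c * G (n + 1) + d * G n)
      ↔ (-1 : ℝ) ^ m * (a * d - b * c) > 0) ∧
    ((a * G m + b * G (m - 1)) / (a * G (n + 1) + b * G n)
        = (c * G m + d * G (m - 1)) / (c * G (n + 1) + d * G n)
      ↔ (-1 : ℝ) ^ m * (a * d - b * c) = 0) := by
  lift m to ℕ using hm
  have hi_pos : (0 : ℝ) < i := by exact_mod_cast (by omega : 0 < i)
  have hGpos {k : ℤ} (hk : 0 ≤ k) : 0 < G k :=
    pos_of_linear_recurrence hi_pos hGm1.ge (hG0 ▸ one_pos) hG hk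
  have hcassini := cassini_of_linear_recurrence hG m hnm
  rw [hG0, hGm1, neg_pow] at hcassini
  refine div_comparison_iff_of_cross_sub
    (add_pos (mul_pos ha (hGpos (by omega))) (mul_pos hb (hGpos (by omega))))
    (add_pos (mul_pos hc (hGpos (by omega))) (mul_pos hd (hGpos (by omega))))
    (mul_pos (pow_pos hi_pos m) (hGpos (k := n - m) (by omega))) ?_
  rw [zpow_natCast]
  linear_combination (a * d - b * c) * hcassini
end

section
/- For the F- and G-sequences, Fₙ·Gₘ − F_{n+2}·G_{m−2} = −(−i)^m · F_{n−m+1} holds whenever n + 1 ≥ m ≥ 1. -/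
/-!
Both sides are governed by the mixed Casoratian `K n m = F n * G m - F (n + 1) * G (m - 1)`.
The two recurrences give `K n (m + 1) = -c * K (n - 1) m`, so `K n m = (-c) ^ m * F (n - m)`
because `K n 0 = F n` by the initial values of `G`. Expanding `F (n + 2)` and `G m` once more
shows that the left-hand side of the identity is `c * K n (m - 1)`.
-/

section

variable {R : Type*} [CommRing R] {c : R} {F G : ℤ → R}

def mixedCasoratian (F G : ℤ → R) (n m : ℤ) : R :=
  F n * G m - F (n + 1) * G (m - 1)

theorem mixedCasoratian_succ
    (hF : ∀ n : ℤ, 2 ≤ n → F n = c * (F (n - 1) + F (n - 2)))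
    (hG : ∀ n : ℤ, 1 ≤ n → G n = c * (G (n - 1) + G (n - 2)))
    {n m : ℤ} (hn : 1 ≤ n) (hm : 0 ≤ m) :
    mixedCasoratian F G n (m + 1) = -c * mixedCasoratian F G (n - 1) m := by
  have hFn := hF (n + 1) (by omega)
  have hGm := hG (m + 1) (by omega)
  simp only [add_sub_cancel_right, show n + 1 - 2 = n - 1 by ring,
    show m + 1 - 2 = m - 1 by ring] at hFn hGm
  simp only [mixedCasoratian, add_sub_cancel_right, sub_add_cancel]
  rw [hFn, hGm]
  ring

theorem mixedCasoratian_eq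
    (hF : ∀ n : ℤ, 2 ≤ n → F n = c * (F (n - 1) + F (n - 2)))
    (hGm1 : G (-1) = 0) (hG0 : G 0 = 1)
    (hG : ∀ n : ℤ, 1 ≤ n → G n = c * (G (n - 1) + G (n - 2))) (k : ℕ) {n : ℤ} (hkn : k ≤ n) :
    mixedCasoratian F G n k = (-c) ^ k * F (n - k) := by
  induction k generalizing n with
  | zero => simp [mixedCasoratian, hG0, hGm1]
  | succ k ih =>
    push_cast at hkn ⊢
    rw [mixedCasoratian_succ hF hG (by omega) (by omega), ih (by omega),
      show n - 1 - k = n - (k + 1) by ring]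
    ring

theorem sub_shift_two_eq_mul_mixedCasoratian
    (hF : ∀ n : ℤ, 2 ≤ n → F n = c * (F (n - 1) + F (n - 2)))
    (hG : ∀ n : ℤ, 1 ≤ n → G n = c * (G (n - 1) + G (n - 2))) {n m : ℤ} (hn : 0 ≤ n)
    (hm : 1 ≤ m) :
    F n * G m - F (n + 2) * G (m - 2) = c * mixedCasoratian F G n (m - 1) := by
  have hFn := hF (n + 2) (by omega)
  simp only [show n + 2 - 1 = n + 1 by ring, add_sub_cancel_right] at hFn
  rw [hFn, hG m hm, mixedCasoratian, show m - 1 - 1 = m - 2 by ring]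
  ring

end

theorem FG_identity_2_19_general (i : ℕ) (F G : ℤ → ℝ)
    (hF : ∀ n : ℤ, 2 ≤ n → F n = i * (F (n - 1) + F (n - 2)))
    (hGm1 : G (-1) = 0) (hG0 : G 0 = 1)
    (hG : ∀ n : ℤ, 1 ≤ n → G n = i * (G (n - 1) + G (n - 2))) :
    ∀ n m : ℤ, 1 ≤ m → m ≤ n + 1 →
      F n * G m - F (n + 2) * G (m - 2) = -(-(i : ℝ)) ^ m * F (n - m + 1) := by
  intro n m hm hmn
  obtain ⟨k, rfl⟩ : ∃ k : ℕ, m = k + 1 := ⟨(m - 1).toNat, by omega⟩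
  rw [sub_shift_two_eq_mul_mixedCasoratian hF hG (by omega) hm, add_sub_cancel_right,
    mixedCasoratian_eq hF hGm1 hG0 hG k (by omega), show n - (k + 1) + 1 = n - k by ring,
    ← Nat.cast_succ, zpow_natCast, pow_succ]
  ring

theorem FG_identity_2_19 (i : ℕ) (hi : 2 ≤ i) (F G : ℤ → ℝ)
    (hF0 : F 0 = 1) (hF1 : F 1 = 1)
    (hF : ∀ n : ℤ, 2 ≤ n → F n = i * (F (n - 1) + F (n - 2)))
    (hGm1 : G (-1) = 0) (hG0 : G 0 = 1)
    (hG : ∀ n : ℤ, 1 ≤ n → G n = i * (G (n - 1) + G (n - 2))) :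
    ∀ n m : ℤ, 1 ≤ m → m ≤ n + 1 →
      F n * G m - F (n + 2) * G (m - 2) = -(-(i : ℝ)) ^ m * F (n - m + 1) :=
  FG_identity_2_19_general i F G hF hGm1 hG0 hG
end

section
/- For all n ≥ 1, F_{2n−1}/F_{2n+1} < G_{2n−1}/G_{2n+1} < F_{2n+1}/F_{2n+3} and F_{2n}/F_{2n+2} < G_{2n−2}/G_{2n} < F_{2n−2}/F_{2n}. -/
/-!
Both `F` and `G` solve the recurrence `x (n + 2) = i * (x (n + 1) + x n)`, and so does the shift
`n ↦ F (n + 2)`. For two solutions `x`, `y` the Casoratian `x n * y (n + 1) - x (n + 1) * y n` is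
multiplied by `-i` at every step, while the two-step cross product `x n * y (n + 2) - x (n + 2) * y n`
equals `i` times it. Each of the four inequalities compares `x m / x (m + 2)` with `y m / y (m + 2)` for
positive solutions, so its truth is the sign of `(-i) ^ m` times the Casoratian at `0`, which is
`i - 1`, `i`, `-i`, `1 - i` for the pairs `(F, G)`, `(G, F (· + 2))`, `(F (· + 2), G)`, `(G, F)`.
-/

def SolvesRecFrom {R : Type*} [Semiring R] (c : R) (a : ℤ) (x : ℤ → R) : Prop :=
  ∀ n, a ≤ n → x (n + 2) = c * (x (n + 1) + x n)

def casoratian {R : Type*} [CommRing R] (x y : ℤ → R) (n : ℤ) : R :=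
  x n * y (n + 1) - x (n + 1) * y n

namespace SolvesRecFrom

section Semiring

variable {R : Type*} [Semiring R] {c : R} {a : ℤ} {x : ℤ → R}

theorem mono (hx : SolvesRecFrom c a x) {b : ℤ} (hab : a ≤ b) : SolvesRecFrom c b x :=
  fun n hn => hx n (hab.trans hn)

theorem comp_add (hx : SolvesRecFrom c a x) (d : ℤ) :
    SolvesRecFrom c (a - d) (fun n => x (n + d)) := fun n hn => by
  simpa only [add_right_comm] using hx (n + d) (by omega)

theorem pos [PartialOrder R] [IsStrictOrderedRing R] (hx : SolvesRecFrom c a x) (hc : 0 < c)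
    (h₀ : 0 < x a) (h₁ : 0 < x (a + 1)) : ∀ m, a ≤ m → 0 < x m := by
  suffices ∀ m, a ≤ m → 0 < x m ∧ 0 < x (m + 1) from fun m hm => (this m hm).1
  refine Int.leInduction ⟨h₀, h₁⟩ fun n hn ⟨hn₀, hn₁⟩ => ⟨hn₁, ?_⟩
  rw [add_assoc, one_add_one_eq_two, hx n hn]
  positivity

end Semiring

section CommRing

variable {R : Type*} [CommRing R] {c : R} {a : ℤ} {x y : ℤ → R}

theorem casoratian_add_one (hx : SolvesRecFrom c a x) (hy : SolvesRecFrom c a y) {n : ℤ}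
    (hn : a ≤ n) : casoratian x y (n + 1) = -c * casoratian x y n := by
  simp only [casoratian, add_assoc, one_add_one_eq_two, hx n hn, hy n hn]
  ring

theorem casoratian_add_natCast (hx : SolvesRecFrom c a x) (hy : SolvesRecFrom c a y) (k : ℕ) :
    casoratian x y (a + k) = (-c) ^ k * casoratian x y a := by
  induction k with
  | zero => simp
  | succ k ih =>
    rw [Nat.cast_succ, ← add_assoc, hx.casoratian_add_one hy (by omega), ih]
    ring

theorem cross_two_step (hx : SolvesRecFrom c a x) (hy : SolvesRecFrom c a y) {n : ℤ}
    (hn : a ≤ n) : x n * y (n + 2) - x (n + 2) * y n = c * casoratian x y n := by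
  rw [casoratian, hx n hn, hy n hn]
  ring

end CommRing

section Field

variable {K : Type*} [Field K] {c : K} {a : ℤ} {x y : ℤ → K}

theorem casoratian_eq_zpow (hx : SolvesRecFrom c a x) (hy : SolvesRecFrom c a y) {m : ℤ}
    (hm : a ≤ m) : casoratian x y m = (-c) ^ (m - a) * casoratian x y a := by
  obtain ⟨k, rfl⟩ := Int.le.dest hm
  rw [hx.casoratian_add_natCast hy, add_sub_cancel_left, zpow_natCast]

variable [LinearOrder K] [IsStrictOrderedRing K] (hx : SolvesRecFrom c a x)
  (hy : SolvesRecFrom c a y) (hc : 0 < c) (hxpos : ∀ m, a ≤ m → 0 < x m)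
  (hypos : ∀ m, a ≤ m → 0 < y m) {m : ℤ} (hm : a ≤ m)
include hx hy hc hxpos hypos hm

theorem div_lt_div_iff_casoratian :
    x m / x (m + 2) < y m / y (m + 2) ↔ (-c) ^ (m - a) * casoratian x y a < 0 := by
  rw [div_lt_div_iff₀ (hxpos _ (by omega)) (hypos _ (by omega)), ← sub_neg, mul_comm (y m),
    hx.cross_two_step hy hm, hx.casoratian_eq_zpow hy hm]
  exact ⟨fun h => neg_of_mul_neg_right h hc.le, mul_neg_of_pos_of_neg hc⟩

theorem div_lt_div_of_odd (hodd : Odd (m - a)) (hxy : 0 < casoratian x y a) :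
    x m / x (m + 2) < y m / y (m + 2) := by
  rw [hx.div_lt_div_iff_casoratian hy hc hxpos hypos hm, hodd.neg_zpow, neg_mul, neg_lt_zero]
  exact mul_pos (zpow_pos hc _) hxy

theorem div_lt_div_of_even (heven : Even (m - a)) (hxy : casoratian x y a < 0) :
    x m / x (m + 2) < y m / y (m + 2) := by
  rw [hx.div_lt_div_iff_casoratian hy hc hxpos hypos hm, heven.neg_zpow]
  exact mul_neg_of_pos_of_neg (zpow_pos hc _) hxy

end Field

end SolvesRecFrom

theorem FG_ratio_inequalities (i : ℕ) (hi : 2 ≤ i) (F G : ℤ → ℝ)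
    (hF0 : F 0 = 1) (hF1 : F 1 = 1)
    (hF : ∀ n : ℤ, 2 ≤ n → F n = i * (F (n - 1) + F (n - 2)))
    (hGm1 : G (-1) = 0) (hG0 : G 0 = 1)
    (hG : ∀ n : ℤ, 1 ≤ n → G n = i * (G (n - 1) + G (n - 2))) :
    ∀ n : ℤ, 1 ≤ n →
      (F (2 * n - 1) / F (2 * n + 1) < G (2 * n - 1) / G (2 * n + 1) ∧
       G (2 * n - 1) / G (2 * n + 1) < F (2 * n + 1) / F (2 * n + 3)) ∧
      (F (2 * n) / F (2 * n + 2) < G (2 * n - 2) / G (2 * n) ∧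
       G (2 * n - 2) / G (2 * n) < F (2 * n - 2) / F (2 * n)) := by
  have hc : (1 : ℝ) < i := by exact_mod_cast hi
  have hc₀ : (0 : ℝ) < i := zero_lt_one.trans hc
  have hFrec : SolvesRecFrom (i : ℝ) 0 F := fun n hn => by
    simpa [show n + 2 - 1 = n + 1 by ring] using hF (n + 2) (by omega)
  have hGrec : SolvesRecFrom (i : ℝ) 0 G := fun n hn => by
    simpa [show n + 2 - 1 = n + 1 by ring] using hG (n + 2) (by omega)
  have hF'rec : SolvesRecFrom (i : ℝ) 0 (fun n => F (n + 2)) := (hFrec.comp_add 2).mono (by norm_num)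
  have hG1 : G 1 = i := by simpa [hG0, hGm1] using hG 1 le_rfl
  have hF2 : F 2 = 2 * i := by simpa [hF0, hF1, one_add_one_eq_two, mul_comm] using hFrec 0 le_rfl
  have hF3 : F 3 = i * (2 * i + 1) := by simpa [hF1, hF2] using hFrec 1 zero_le_one
  have hFpos := hFrec.pos hc₀ (by simp [hF0]) (by simp [hF1])
  have hGpos := hGrec.pos hc₀ (by simp [hG0]) (by simp [hG1, hc₀])
  have hF'pos : ∀ m : ℤ, 0 ≤ m → 0 < F (m + 2) := fun m hm => hFpos _ (by omega)
  have hFG : casoratian F G 0 = i - 1 := by simp [casoratian, hF0, hF1, hG0, hG1]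
  have hGF : casoratian G F 0 = 1 - i := by simp [casoratian, hF0, hF1, hG0, hG1]
  have hGF' : casoratian G (fun n => F (n + 2)) 0 = i := by
    simp only [casoratian, zero_add, Int.reduceAdd, hF2, hF3, hG0, hG1]; ring
  have hF'G : casoratian (fun n => F (n + 2)) G 0 = -i := by
    simp only [casoratian, zero_add, Int.reduceAdd, hF2, hF3, hG0, hG1]; ring
  intro n hn
  refine ⟨⟨?_, ?_⟩, ?_, ?_⟩
  · have h := hFrec.div_lt_div_of_odd hGrec hc₀ hFpos hGpos (m := 2 * n - 1) (by omega)
      ⟨n - 1, by ring⟩ (by linarith)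
    rwa [show 2 * n - 1 + 2 = 2 * n + 1 by ring] at h
  · have h := hGrec.div_lt_div_of_odd hF'rec hc₀ hGpos hF'pos (m := 2 * n - 1) (by omega)
      ⟨n - 1, by ring⟩ (by rwa [hGF'])
    rwa [show 2 * n - 1 + 2 = 2 * n + 1 by ring, show 2 * n + 1 + 2 = 2 * n + 3 by ring] at h
  · have h := hF'rec.div_lt_div_of_even hGrec hc₀ hF'pos hGpos (m := 2 * n - 2) (by omega)
      ⟨n - 1, by ring⟩ (by linarith)
    rwa [show 2 * n - 2 + 2 = 2 * n by ring] at h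
  · have h := hGrec.div_lt_div_of_even hFrec hc₀ hGpos hFpos (m := 2 * n - 2) (by omega)
      ⟨n - 1, by ring⟩ (by linarith)
    rwa [show 2 * n - 2 + 2 = 2 * n by ring] at h
end

section
/- Let ω = (√(i(i+4)) − i)/(2i). Then lim_{n→∞} F_{n+1}·ωⁿ = 1/2 + (3/2)·√(i/(i+4)) = (2(i+1) + 3iω)/(i+4). Moreover, F_{2n+1}·ω^{2n} is increasing and F_{2n+2}·ω^{2n+1} is decreasing, both converging to this limit. -/
/-!
Let `α > 0 > β` be the roots of `x ^ 2 = i * x + i`, so that `ω = α⁻¹`. Binet's formula gives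
`F (n + 1) * ω ^ n = L + c * r ^ n` with `L = α (1 - β) / (α - β)`, `c = β (α - 1) / (α - β) ≤ 0`
and `r = β / α ∈ (-1, 0)`, because `α + β = i > 0` and `α ≥ 1`. Hence the limit is `L`, and as
`r ^ n` alternates in sign, the terms with `n` even increase and those with `n` odd decrease.
-/

open Filter Topology

section Binet

variable {K : Type*} [Field K] {u : ℕ → K} {α β : K}

theorem eq_binet_of_recurrence (hαβ : α ≠ β)
    (hu : ∀ n, u (n + 2) = (α + β) * u (n + 1) - α * β * u n) (n : ℕ) :
    u n = ((u 1 - β * u 0) * α ^ n + (α * u 0 - u 1) * β ^ n) / (α - β) := by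
  have hne : α - β ≠ 0 := sub_ne_zero.mpr hαβ
  induction n using Nat.twoStepInduction with
  | zero => field_simp; ring
  | one => field_simp; ring
  | more n ih₀ ih₁ =>
    rw [hu, ih₀, ih₁]
    field_simp
    ring

theorem succ_mul_inv_pow_eq_of_recurrence (hα : α ≠ 0) (hαβ : α ≠ β)
    (hu : ∀ n, u (n + 2) = (α + β) * u (n + 1) - α * β * u n) (n : ℕ) :
    u (n + 1) * α⁻¹ ^ n = α * (u 1 - β * u 0) / (α - β)
      + β * (α * u 0 - u 1) / (α - β) * (β / α) ^ n := by
  have hne : α - β ≠ 0 := sub_ne_zero.mpr hαβ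
  rw [eq_binet_of_recurrence hαβ hu, div_pow, inv_pow]
  field_simp
  ring

end Binet

section Geometric

variable {L c r : ℝ}

theorem tendsto_const_add_mul_pow (hr : |r| < 1) :
    Tendsto (fun n : ℕ => L + c * r ^ n) atTop (𝓝 L) := by
  simpa using tendsto_const_nhds.add
    ((tendsto_pow_atTop_nhds_zero_of_abs_lt_one hr).const_mul c)

theorem antitone_pow_two_mul (hr : |r| ≤ 1) : Antitone fun n : ℕ => r ^ (2 * n) := by
  simp_rw [pow_mul]
  exact pow_right_anti₀ (sq_nonneg r) (sq_le_one_iff_abs_le_one r |>.mpr hr)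

theorem monotone_const_add_mul_pow_two_mul (hc : c ≤ 0) (hr : |r| ≤ 1) :
    Monotone fun n : ℕ => L + c * r ^ (2 * n) :=
  ((antitone_pow_two_mul hr).const_mul_of_nonpos hc).const_add L

theorem antitone_const_add_mul_pow_two_mul_add_one (hc : c ≤ 0) (hr₀ : r ≤ 0) (hr : |r| ≤ 1) :
    Antitone fun n : ℕ => L + c * r ^ (2 * n + 1) := by
  simp_rw [pow_succ', ← mul_assoc]
  exact ((antitone_pow_two_mul hr).const_mul (mul_nonneg_of_nonpos_of_nonpos hc hr₀)).const_add L

end Geometric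

section Roots

variable {t : ℝ}

/-- The roots of `x ^ 2 = t * x + t`. -/
noncomputable def fibRootPos (t : ℝ) : ℝ := (t + √(t * (t + 4))) / 2

noncomputable def fibRootNeg (t : ℝ) : ℝ := (t - √(t * (t + 4))) / 2

theorem sq_sqrt_mul_add_four (ht : 0 ≤ t) : √(t * (t + 4)) ^ 2 = t * (t + 4) :=
  Real.sq_sqrt (by positivity)

theorem fibRootPos_add_fibRootNeg : fibRootPos t + fibRootNeg t = t := by
  unfold fibRootPos fibRootNeg; ring

theorem fibRootPos_mul_fibRootNeg (ht : 0 ≤ t) : fibRootPos t * fibRootNeg t = -t := by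
  unfold fibRootPos fibRootNeg; linear_combination -sq_sqrt_mul_add_four ht / 4

theorem fibRootPos_sub_fibRootNeg : fibRootPos t - fibRootNeg t = √(t * (t + 4)) := by
  unfold fibRootPos fibRootNeg; ring

theorem fibRootNeg_neg (ht : 0 < t) : fibRootNeg t < 0 := by
  have := sq_sqrt_mul_add_four ht.le
  unfold fibRootNeg
  nlinarith [Real.sqrt_nonneg (t * (t + 4))]

theorem one_le_fibRootPos (ht : 1 / 2 ≤ t) : 1 ≤ fibRootPos t := by
  have := sq_sqrt_mul_add_four (by linarith : 0 ≤ t)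
  unfold fibRootPos
  nlinarith [Real.sqrt_nonneg (t * (t + 4))]

theorem inv_fibRootPos (ht : 0 < t) : (fibRootPos t)⁻¹ = (√(t * (t + 4)) - t) / (2 * t) := by
  have := sq_sqrt_mul_add_four ht.le
  have hpos : 0 < t + √(t * (t + 4)) := by positivity
  unfold fibRootPos
  field_simp
  linear_combination -this

theorem abs_fibRootNeg_div_fibRootPos_lt_one (ht : 0 < t) :
    |fibRootNeg t / fibRootPos t| < 1 := by
  have hsum := fibRootPos_add_fibRootNeg (t := t)
  have hneg := fibRootNeg_neg ht
  have hpos : 0 < fibRootPos t := by linarith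
  rw [abs_div, div_lt_one (abs_pos.mpr hpos.ne'), abs_of_neg hneg, abs_of_pos (by linarith)]
  linarith

theorem sqrt_div_add_four (ht : 0 < t) : √(t / (t + 4)) = t / √(t * (t + 4)) := by
  have hs := sq_sqrt_mul_add_four ht.le
  have hs₀ : 0 < √(t * (t + 4)) := by positivity
  rw [← Real.sqrt_sq (by positivity : 0 ≤ t / √(t * (t + 4))), div_pow, hs]
  congr 1
  field_simp

theorem fibRootPos_mul_one_sub_fibRootNeg_div (ht : 0 < t) :
    fibRootPos t * (1 - fibRootNeg t) / (fibRootPos t - fibRootNeg t)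
      = 1 / 2 + 3 / 2 * √(t / (t + 4)) := by
  have hs := sq_sqrt_mul_add_four ht.le
  have hs₀ : 0 < √(t * (t + 4)) := by positivity
  rw [fibRootPos_sub_fibRootNeg, sqrt_div_add_four ht]
  unfold fibRootPos fibRootNeg
  field_simp
  linear_combination hs

theorem one_half_add_sqrt_eq (ht : 0 < t) :
    1 / 2 + 3 / 2 * √(t / (t + 4)) = (2 * (t + 1) + 3 * t * (fibRootPos t)⁻¹) / (t + 4) := by
  have hs := sq_sqrt_mul_add_four ht.le
  have hs₀ : 0 < √(t * (t + 4)) := by positivity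
  rw [sqrt_div_add_four ht, inv_fibRootPos ht]
  field_simp
  linear_combination -3 * hs

end Roots

theorem F_omega_limit (i : ℕ) (hi : 2 ≤ i) (F : ℕ → ℝ)
    (hF0 : F 0 = 1) (hF1 : F 1 = 1)
    (hF : ∀ n, 2 ≤ n → F n = i * (F (n - 1) + F (n - 2)))
    (ω : ℝ) (hω : ω = (Real.sqrt (i * (i + 4)) - i) / (2 * i)) :
    (1 / 2 + (3 / 2) * Real.sqrt (i / (i + 4)) = (2 * ((i : ℝ) + 1) + 3 * i * ω) / (i + 4)) ∧
    Filter.Tendsto (fun n : ℕ => F (n + 1) * ω ^ n) Filter.atTop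
      (nhds (1 / 2 + (3 / 2) * Real.sqrt (i / (i + 4)))) ∧
    Monotone (fun n : ℕ => F (2 * n + 1) * ω ^ (2 * n)) ∧
    Antitone (fun n : ℕ => F (2 * n + 2) * ω ^ (2 * n + 1)) ∧
    Filter.Tendsto (fun n : ℕ => F (2 * n + 1) * ω ^ (2 * n)) Filter.atTop
      (nhds (1 / 2 + (3 / 2) * Real.sqrt (i / (i + 4)))) ∧
    Filter.Tendsto (fun n : ℕ => F (2 * n + 2) * ω ^ (2 * n + 1)) Filter.atTop
      (nhds (1 / 2 + (3 / 2) * Real.sqrt (i / (i + 4)))) := by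
  have hi' : (2 : ℝ) ≤ i := by exact_mod_cast hi
  have ht : (0 : ℝ) < i := by linarith
  set α := fibRootPos i
  set β := fibRootNeg i
  have hα : 1 ≤ α := one_le_fibRootPos (by linarith)
  have hβ : β < 0 := fibRootNeg_neg ht
  have hωα : ω = α⁻¹ := by rw [hω, inv_fibRootPos ht]
  have hrec : ∀ n, F (n + 2) = (α + β) * F (n + 1) - α * β * F n := fun n => by
    rw [fibRootPos_add_fibRootNeg, fibRootPos_mul_fibRootNeg ht.le, hF (n + 2) (by omega)]
    simp only [Nat.add_sub_cancel, Nat.add_one_sub_one]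
    ring
  have hseq (n : ℕ) : F (n + 1) * ω ^ n
      = 1 / 2 + 3 / 2 * √(i / (i + 4)) + β * (α - 1) / (α - β) * (β / α) ^ n := by
    rw [hωα, succ_mul_inv_pow_eq_of_recurrence (by positivity) (by linarith) hrec, hF0, hF1,
      mul_one, mul_one, fibRootPos_mul_one_sub_fibRootNeg_div ht]
  have hc : β * (α - 1) / (α - β) ≤ 0 :=
    div_nonpos_of_nonpos_of_nonneg (mul_nonpos_of_nonpos_of_nonneg hβ.le (by linarith))
      (by linarith)
  have hr : |β / α| < 1 := abs_fibRootNeg_div_fibRootPos_lt_one ht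
  have hr₀ : β / α ≤ 0 := div_nonpos_of_nonpos_of_nonneg hβ.le (by linarith)
  have hlim := (tendsto_const_add_mul_pow hr).congr fun n => (hseq n).symm
  refine ⟨by rw [hωα]; exact one_half_add_sqrt_eq ht, hlim, ?_, ?_,
    hlim.comp (tendsto_id.const_mul_atTop' two_pos),
    hlim.comp (StrictMono.tendsto_atTop fun _ _ h => by omega)⟩
  · rw [funext fun n => hseq (2 * n)]
    exact monotone_const_add_mul_pow_two_mul hc hr.le
  · rw [funext fun n => hseq (2 * n + 1)]
    exact antitone_const_add_mul_pow_two_mul_add_one hc hr₀ hr.le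
end

section
/- Let ω = (√(i(i+4)) − i)/(2i). Then sup_{n≥0} F_{n+1}·ωⁿ = F₂·ω = 2iω. -/
/-!
With `ω` the positive root of `i x² + i x = 1`, the terms `aₙ = F (n + 1) ωⁿ` satisfy
`aₙ₊₂ = (i ω) aₙ₊₁ + (i ω²) aₙ`, a convex combination of the two previous terms. Hence every
term is bounded by `max a₀ a₁ = max 1 (2 i ω) = 2 i ω`, which is attained at `n = 1`.
-/

open Real

theorem le_of_recurrence_convex_combination {K : Type*} [Semiring K] [PartialOrder K]
    [IsOrderedRing K] {a : ℕ → K} {p q M : K} (hp : 0 ≤ p) (hq : 0 ≤ q) (hpq : p + q = 1)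
    (ha : ∀ n, a (n + 2) = p * a (n + 1) + q * a n) (h0 : a 0 ≤ M) (h1 : a 1 ≤ M) (n : ℕ) :
    a n ≤ M := by
  have two_steps : ∀ n, a n ≤ M ∧ a (n + 1) ≤ M := by
    intro n
    induction n with
    | zero => exact ⟨h0, h1⟩
    | succ n ih =>
      refine ⟨ih.2, ?_⟩
      calc a (n + 2) = p * a (n + 1) + q * a n := ha n
        _ ≤ p * M + q * M := by gcongr; exacts [ih.2, ih.1]
        _ = M := by rw [← add_mul, hpq, one_mul]
  exact (two_steps n).1

section QuadraticRoot

variable {c ω : ℝ}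

theorem pos_of_eq_quadratic_root (hc : 0 < c) (hω : ω = (√(c * (c + 4)) - c) / (2 * c)) :
    0 < ω := by
  have : c < √(c * (c + 4)) := (lt_sqrt hc.le).2 (by nlinarith)
  rw [hω]; exact div_pos (by linarith) (by positivity)

theorem mul_add_mul_sq_eq_one (hc : 0 < c) (hω : ω = (√(c * (c + 4)) - c) / (2 * c)) :
    c * ω + c * ω ^ 2 = 1 := by
  have hs : √(c * (c + 4)) ^ 2 = c * (c + 4) := sq_sqrt (by positivity)
  rw [hω]; field_simp; nlinarith [hs]

theorem one_le_two_mul_mul (hc : 1 ≤ 2 * c) (hω : ω = (√(c * (c + 4)) - c) / (2 * c)) :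
    1 ≤ 2 * c * ω := by
  have : c + 1 ≤ √(c * (c + 4)) := le_sqrt_of_sq_le (by nlinarith)
  have : 2 * c * ω = √(c * (c + 4)) - c := by
    rw [hω, mul_div_cancel₀ _ (by linarith)]
  linarith

end QuadraticRoot

theorem F_omega_sup (i : ℕ) (hi : 2 ≤ i) (F : ℕ → ℝ)
    (hF0 : F 0 = 1) (hF1 : F 1 = 1)
    (hF : ∀ n, 2 ≤ n → F n = i * (F (n - 1) + F (n - 2)))
    (ω : ℝ) (hω : ω = (Real.sqrt (i * (i + 4)) - i) / (2 * i)) :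
    (⨆ n : ℕ, F (n + 1) * ω ^ n) = F 2 * ω ∧ F 2 * ω = 2 * i * ω := by
  have hi' : (2 : ℝ) ≤ i := by exact_mod_cast hi
  have hωpos := pos_of_eq_quadratic_root (by linarith) hω
  have hF2 : F 2 = 2 * i := by rw [hF 2 le_rfl]; norm_num [hF0, hF1]; ring
  have hrec : ∀ n, F (n + 2 + 1) * ω ^ (n + 2) =
      (i * ω) * (F (n + 1 + 1) * ω ^ (n + 1)) + (i * ω ^ 2) * (F (n + 1) * ω ^ n) := by
    intro n
    rw [hF (n + 2 + 1) (by omega), show n + 2 + 1 - 1 = n + 1 + 1 by omega,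
      show n + 2 + 1 - 2 = n + 1 by omega]
    ring
  have bound : ∀ n, F (n + 1) * ω ^ n ≤ F 2 * ω :=
    le_of_recurrence_convex_combination (by positivity) (by positivity)
      (mul_add_mul_sq_eq_one (by linarith) hω) hrec
      (by simpa [hF1, hF2] using one_le_two_mul_mul (by linarith) hω) (by simp)
  refine ⟨le_antisymm (ciSup_le bound) ?_, by rw [hF2]⟩
  simpa using le_ciSup ⟨_, Set.forall_mem_range.2 bound⟩ 1
end

section
/- Let ω = (√(i(i+4)) − i)/(2i) and δ = i²(2i+3)·ω³. Then δ = i(2i+3)(1 − iω)ω = i(2i+3)((i+1)ω − 1) = ((2i+3)/2)·((i+1)√(i(i+4)) − i(i+3)), and δ < 2. -/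
/-!
Let `ω > 0` be the positive root of `x (ω + ω²) = 1`. Substituting `1 = x ω (1 + ω)` gives
the first two expressions, and multiplying `δ = x² (2x + 3) ω³` by `(1 + ω)³` and using
`x² ω² (1 + ω)² = 1` gives `δ (1 + ω)³ = 2 + 3ω + 3ω²`, which is less than `2 (1 + ω)³`.
-/

open Real

noncomputable def posRoot (x : ℝ) : ℝ := (√(x * (x + 4)) - x) / (2 * x)

section posRoot

variable {x : ℝ}

lemma posRoot_pos (hx : 0 < x) : 0 < posRoot x := by
  have hlt : x < √(x * (x + 4)) := lt_sqrt_of_sq_lt (by nlinarith)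
  unfold posRoot
  exact div_pos (by linarith) (by linarith)

lemma mul_posRoot_add_sq (hx : 0 < x) : x * (posRoot x + posRoot x ^ 2) = 1 := by
  have hs : √(x * (x + 4)) ^ 2 = x * (x + 4) := sq_sqrt (by positivity)
  unfold posRoot
  field_simp
  linear_combination hs

lemma mul_add_one_mul_posRoot_sub_one (hx : x ≠ 0) :
    x * ((x + 1) * posRoot x - 1) = ((x + 1) * √(x * (x + 4)) - x * (x + 3)) / 2 := by
  unfold posRoot
  field_simp
  ring

end posRoot

section RootIdentities

variable {x ω : ℝ}

lemma sq_mul_cube_eq_of_mul_add_sq_eq_one (h : x * (ω + ω ^ 2) = 1) :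
    x ^ 2 * ω ^ 3 = x * (1 - x * ω) * ω := by
  linear_combination x * ω * h

lemma mul_one_sub_mul_mul_eq_of_mul_add_sq_eq_one (h : x * (ω + ω ^ 2) = 1) :
    x * (1 - x * ω) * ω = x * ((x + 1) * ω - 1) := by
  linear_combination (-x) * h

lemma mul_cube_mul_one_add_cube_of_mul_add_sq_eq_one (h : x * (ω + ω ^ 2) = 1) :
    x ^ 2 * (2 * x + 3) * ω ^ 3 * (1 + ω) ^ 3 = 2 + 3 * ω + 3 * ω ^ 2 := by
  linear_combination ((2 * x + 3) * ω * (1 + ω) * (x * ω * (1 + ω) + 1) + 2) * h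

lemma mul_cube_lt_two_of_mul_add_sq_eq_one (h : x * (ω + ω ^ 2) = 1) (hω : 0 < ω) :
    x ^ 2 * (2 * x + 3) * ω ^ 3 < 2 := by
  have hpos : 0 < (1 + ω) ^ 3 := by positivity
  rw [← mul_lt_mul_iff_of_pos_right hpos, mul_cube_mul_one_add_cube_of_mul_add_sq_eq_one h]
  nlinarith [pow_pos hω 3, sq_nonneg ω]

end RootIdentities

theorem delta_expressions (i : ℕ) (hi : 2 ≤ i)
    (ω : ℝ) (hω : ω = (Real.sqrt (i * (i + 4)) - i) / (2 * i))
    (δ : ℝ) (hδ : δ = (i : ℝ) ^ 2 * (2 * i + 3) * ω ^ 3) :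
    δ = (i : ℝ) * (2 * i + 3) * (1 - i * ω) * ω ∧
    δ = (i : ℝ) * (2 * i + 3) * ((i + 1) * ω - 1) ∧
    δ = ((2 * (i : ℝ) + 3) / 2) * (((i : ℝ) + 1) * Real.sqrt (i * (i + 4)) - i * (i + 3)) ∧
    δ < 2 := by
  have hx : (0 : ℝ) < i := by exact_mod_cast (by omega : 0 < i)
  obtain rfl : ω = posRoot i := hω
  have hq := mul_posRoot_add_sq hx
  have h1 := sq_mul_cube_eq_of_mul_add_sq_eq_one hq
  have h2 := mul_one_sub_mul_mul_eq_of_mul_add_sq_eq_one hq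
  have h3 := mul_add_one_mul_posRoot_sub_one hx.ne'
  subst hδ
  refine ⟨by linear_combination (2 * (i : ℝ) + 3) * h1,
    by linear_combination (2 * (i : ℝ) + 3) * (h1 + h2),
    by linear_combination (2 * (i : ℝ) + 3) * (h1 + h2 + h3),
    mul_cube_lt_two_of_mul_add_sq_eq_one hq (posRoot_pos hx)⟩
end

section
/- For every integer i ≥ 2, with ω = (√(i(i+4)) − i)/(2i), the inequality 2i·((1/i)·⌊(i+1)/2⌋ + χ(i)·ω) < i(2i+3)(1 − iω) holds, where χ(i) = 1 if i is even and 0 if i is odd. -/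
/-!
Put `s = √(i(i+4))`, so that `iω = (s - i)/2` and `i + 1 < s < i + 2`. After clearing the
factor `2i`, the left side is `i + 1` for odd `i` and `s` for even `i`, hence at most `s`,
while the right side is `i(2i+3)(i+2-s)/2`. Since `(i+2-s)(i+2+s) = 4`, the inequality
`s < i(2i+3)(i+2-s)/2` becomes `s(i+2) < i(3i+2)`, which follows from `s < i+2` and
`(i+2)² ≤ i(3i+2)`, i.e. `(i-2)(i+1) ≥ 0`.
-/

open Real

lemma add_one_lt_sqrt_mul_add_four {x : ℝ} (hx : 1 / 2 < x) : x + 1 < √(x * (x + 4)) :=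
  lt_sqrt_of_sq_lt (by nlinarith)

lemma sqrt_mul_add_four_lt_add_two {x : ℝ} (hx : 0 ≤ x) : √(x * (x + 4)) < x + 2 :=
  (sqrt_lt' (by linarith)).mpr (by nlinarith)

lemma two_mul_sqrt_mul_add_four_lt {x : ℝ} (hx : 2 ≤ x) :
    2 * √(x * (x + 4)) < x * (2 * x + 3) * (x + 2 - √(x * (x + 4))) := by
  set s := √(x * (x + 4))
  have hs_sq : s ^ 2 = x * (x + 4) := sq_sqrt (by positivity)
  have hs_pos : 0 < s := sqrt_pos.mpr (by positivity)
  have hs_lt : s < x + 2 := sqrt_mul_add_four_lt_add_two (by linarith)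
  have hconj : (x + 2 - s) * (x + 2 + s) = 4 := by nlinarith
  have hmain : s * (x + 2 + s) < 2 * x * (2 * x + 3) := by
    nlinarith [mul_lt_mul_of_pos_right hs_lt (by linarith : (0 : ℝ) < x + 2)]
  have hpos : 0 < x + 2 + s := by linarith
  nlinarith

lemma two_mul_succ_div_two_add_ite_le (n : ℕ) {s : ℝ} (hs : n + 1 ≤ s) :
    2 * (((n + 1) / 2 : ℕ) : ℝ) + (if Even n then (1 : ℝ) else 0) * (s - n) ≤ s := by
  rcases Nat.even_or_odd' n with ⟨k, rfl | rfl⟩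
  · have hk : (2 * k + 1) / 2 = k := by omega
    simp [hk]
  · have hk : (2 * k + 1 + 1) / 2 = k + 1 := by omega
    have hodd : ¬Even (2 * k + 1) := Nat.not_even_iff_odd.mpr (odd_two_mul_add_one k)
    simp only [hk, hodd, if_false, zero_mul, add_zero]
    push_cast at hs ⊢
    linarith

theorem first_step_inequality (i : ℕ) (hi : 2 ≤ i)
    (ω : ℝ) (hω : ω = (Real.sqrt (i * (i + 4)) - i) / (2 * i)) :
    2 * (i : ℝ) * ((1 / i) * (((i + 1) / 2 : ℕ) : ℝ) + (if Even i then (1 : ℝ) else 0) * ω)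
      < (i : ℝ) * (2 * i + 3) * (1 - i * ω) := by
  have hi' : (2 : ℝ) ≤ i := by exact_mod_cast hi
  have hi0 : (i : ℝ) ≠ 0 := by positivity
  set s := √(i * (i + 4))
  have hlhs : 2 * (i : ℝ) * ((1 / i) * (((i + 1) / 2 : ℕ) : ℝ)
      + (if Even i then (1 : ℝ) else 0) * ω)
      = 2 * (((i + 1) / 2 : ℕ) : ℝ) + (if Even i then (1 : ℝ) else 0) * (s - i) := by
    rw [hω]; field_simp
  have hrhs : (i : ℝ) * (2 * i + 3) * (1 - i * ω) = i * (2 * i + 3) * (i + 2 - s) / 2 := by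
    rw [hω]; field_simp; ring
  rw [hlhs, hrhs]
  calc _ ≤ s :=
        two_mul_succ_div_two_add_ite_le i (add_one_lt_sqrt_mul_add_four (by linarith)).le
    _ < _ := by linarith [two_mul_sqrt_mul_add_four_lt hi']
end

section
/- For every integer i ≥ 2, δ < F₂·F₅/F₆, i.e., i²(2i+3)ω³ < 2i · i²(2i²+5i+1) / (i³(2i²+7i+4)), where ω = (√(i(i+4)) − i)/(2i). -/
/-!
`ω` is the positive root of `x t² + x t = 1` (with `x = i`), so `x² ω³ = x (x + 1) ω - x` and
the claim is linear in `ω`: it says `ω < c` for an explicit rational function `c` of `x`. As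
`t ↦ x t² + x t` is increasing on `t ≥ 0`, this amounts to `x c² + x c > 1`, which clears to the
positivity of a polynomial of degree `6` on `x ≥ 2`.
-/

namespace GeneralizedFibonacci

open Real

theorem mul_sq_add_mul_eq_one {x ω : ℝ} (hx : 0 < x)
    (hω : ω = (√(x * (x + 4)) - x) / (2 * x)) : x * ω ^ 2 + x * ω = 1 := by
  have hs : √(x * (x + 4)) ^ 2 = x * (x + 4) := sq_sqrt (by positivity)
  rw [hω]
  field_simp
  linear_combination hs

theorem sq_mul_cube_eq {x ω : ℝ} (h : x * ω ^ 2 + x * ω = 1) :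
    x ^ 2 * ω ^ 3 = x * (x + 1) * ω - x := by
  linear_combination (x * ω - x) * h

theorem lt_of_quadratic_lt {a b t c : ℝ} (ha : 0 ≤ a) (hb : 0 ≤ b) (hc : 0 ≤ c)
    (h : a * t ^ 2 + b * t < a * c ^ 2 + b * c) : t < c := by
  by_contra! hct
  nlinarith [mul_le_mul_of_nonneg_left (pow_le_pow_left₀ hc hct 2) ha,
    mul_le_mul_of_nonneg_left hct hb]

theorem sextic_pos {x : ℝ} (hx : 2 ≤ x) :
    0 < 8 * x ^ 6 + 52 * x ^ 5 + 110 * x ^ 4 + 71 * x ^ 3 - 22 * x ^ 2 - 32 * x + 4 := by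
  obtain ⟨t, ht, rfl⟩ : ∃ t, 0 ≤ t ∧ x = t + 2 := ⟨x - 2, by linarith, by ring⟩
  ring_nf
  positivity

/-- The value of `ω` for which the inequality of the main theorem becomes an equality. -/
noncomputable def omegaBound (x : ℝ) : ℝ :=
  (x * (2 * x + 3) * (2 * x ^ 2 + 7 * x + 4) + 2 * (2 * x ^ 2 + 5 * x + 1)) /
    (x * (x + 1) * (2 * x + 3) * (2 * x ^ 2 + 7 * x + 4))

theorem one_lt_mul_omegaBound_sq_add {x : ℝ} (hx : 2 ≤ x) :
    1 < x * omegaBound x ^ 2 + x * omegaBound x := by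
  have hP := sextic_pos hx
  rw [omegaBound, ← sub_pos]
  field_simp
  linarith

theorem omega_lt_omegaBound {x ω : ℝ} (hx : 2 ≤ x)
    (hω : ω = (√(x * (x + 4)) - x) / (2 * x)) : ω < omegaBound x := by
  have hx0 : 0 < x := by linarith
  refine lt_of_quadratic_lt hx0.le hx0.le (by rw [omegaBound]; positivity) ?_
  rw [mul_sq_add_mul_eq_one hx0 hω]
  exact one_lt_mul_omegaBound_sq_add hx

end GeneralizedFibonacci

open GeneralizedFibonacci in
theorem delta_lt_F2F5_div_F6 (i : ℕ) (hi : 2 ≤ i)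
    (ω : ℝ) (hω : ω = (Real.sqrt (i * (i + 4)) - i) / (2 * i)) :
    (i : ℝ) ^ 2 * (2 * i + 3) * ω ^ 3
      < 2 * (i : ℝ) * ((i : ℝ) ^ 2 * (2 * i ^ 2 + 5 * i + 1)) / ((i : ℝ) ^ 3 * (2 * i ^ 2 + 7 * i + 4)) := by
  have hx : (2 : ℝ) ≤ i := by exact_mod_cast hi
  have hx0 : (0 : ℝ) < i := by linarith
  calc (i : ℝ) ^ 2 * (2 * i + 3) * ω ^ 3
      = (2 * i + 3) * (i * (i + 1) * ω - i) := by
        rw [← sq_mul_cube_eq (mul_sq_add_mul_eq_one hx0 hω)]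
        ring
    _ < (2 * i + 3) * (i * (i + 1) * omegaBound i - i) := by
        gcongr
        exact omega_lt_omegaBound hx hω
    _ = _ := by
        rw [omegaBound]
        field_simp
        ring
end

section
/- Let ω = (√(i(i+4)) − i)/(2i), δ = i²(2i+3)ω³, L = lim_{n→∞} F_{n+1}ωⁿ = (2(i+1)+3iω)/(i+4), and γ = δ/L. Then γ < (i+1)(1+ω)/(i+2); consequently 1/i − γω > G₁/G₃ = i/(i²(i+2)) = 1/(i(i+2)). -/
/-!
Put `x = i`. The relation `x (ω + ω²) = 1` reduces every power of `ω` to a linear expression in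
`ω`, so after clearing the positive denominators the bound on `γ` becomes a linear bound `B ω < A`
with `A, B` explicit polynomials in `x`. As `t ↦ t² + B t` is increasing on `t ≥ 0`, this amounts to
`B² < x (A² + A B)`, and `x (A² + A B) - B² = 2x⁵ + 25x⁴ + 105x³ + 172x² + 95x - 4 > 0`.
The second inequality follows on multiplying the first by `ω`, because `ω (1 + ω) = 1 / x`.
-/

/-- The positive root of `x (t + t²) = 1`, i.e. the reciprocal of the dominant root of the
characteristic equation `t² = x (t + 1)` of the recurrence. -/
noncomputable def fibRoot (x : ℝ) : ℝ := (√(x * (x + 4)) - x) / (2 * x)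

lemma fibRoot_pos {x : ℝ} (hx : 0 < x) : 0 < fibRoot x := by
  have : x < √(x * (x + 4)) := (Real.lt_sqrt hx.le).2 (by nlinarith)
  unfold fibRoot
  apply div_pos <;> linarith

lemma mul_fibRoot_add_sq {x : ℝ} (hx : 0 < x) : x * (fibRoot x + fibRoot x ^ 2) = 1 := by
  have hs : √(x * (x + 4)) ^ 2 = x * (x + 4) := Real.sq_sqrt (by positivity)
  unfold fibRoot
  field_simp
  linear_combination hs

lemma lt_of_sq_add_mul_lt_sq_add_mul {a b c : ℝ} (hb : 0 ≤ b) (hc : 0 ≤ c)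
    (h : a ^ 2 + b * a < c ^ 2 + b * c) : a < c := by
  by_contra! hca
  nlinarith [mul_le_mul hca hca hc (hc.trans hca)]

section

variable {x ω : ℝ}

lemma sq_mul_pow_three_eq (hrel : x * (ω + ω ^ 2) = 1) :
    x ^ 2 * ω ^ 3 = x * ((x + 1) * ω - 1) := by
  linear_combination x * (ω - 1) * hrel

lemma one_add_mul_eq (hrel : x * (ω + ω ^ 2) = 1) :
    (1 + ω) * (2 * (x + 1) + 3 * x * ω) = 2 * x + 5 + (2 * x + 2) * ω := by
  linear_combination 3 * hrel

lemma mul_root_lt (hx : 1 ≤ x) (hrel : x * (ω + ω ^ 2) = 1) :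
    (x + 1) * (x * (2 * x + 3) * (x + 2) * (x + 4) - 2 * (x + 1)) * ω
      < x * (2 * x + 3) * (x + 2) * (x + 4) + (x + 1) * (2 * x + 5) := by
  set P := x * (2 * x + 3) * (x + 2) * (x + 4)
  set B := (x + 1) * (P - 2 * (x + 1))
  set A := P + (x + 1) * (2 * x + 5)
  have hx0 : 0 < x := by linarith
  have hP75 : 75 * x ≤ P := by
    have h15 : 15 ≤ (2 * x + 3) * (x + 2) := by nlinarith
    have h75 : 75 ≤ (2 * x + 3) * (x + 2) * (x + 4) := by nlinarith
    nlinarith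
  have hB : 0 ≤ B := mul_nonneg (by linarith) (by linarith)
  have hA : 0 ≤ A := by positivity
  have hscaled : x * ((B * ω) ^ 2 + B * (B * ω)) = B ^ 2 := by
    linear_combination B ^ 2 * hrel
  have hpoly : x * (A ^ 2 + B * A) - B ^ 2
      = 2 * x ^ 5 + 25 * x ^ 4 + 105 * x ^ 3 + 172 * x ^ 2 + 95 * x - 4 := by
    simp only [A, B, P]; ring
  have hpos : 0 < 2 * x ^ 5 + 25 * x ^ 4 + 105 * x ^ 3 + 172 * x ^ 2 + 95 * x - 4 := by
    have : 0 ≤ 2 * x ^ 5 + 25 * x ^ 4 + 105 * x ^ 3 + 172 * x ^ 2 := by positivity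
    linarith
  refine lt_of_sq_add_mul_lt_sq_add_mul hB hA (lt_of_mul_lt_mul_left ?_ hx0.le)
  linarith

lemma gamma_lt (hx : 1 ≤ x) (hω : 0 < ω) (hrel : x * (ω + ω ^ 2) = 1) :
    x ^ 2 * (2 * x + 3) * ω ^ 3 / ((2 * (x + 1) + 3 * x * ω) / (x + 4))
      < (x + 1) * (1 + ω) / (x + 2) := by
  have hL : 0 < 2 * (x + 1) + 3 * x * ω := by positivity
  rw [div_div_eq_mul_div, div_lt_div_iff₀ hL (by positivity), mul_assoc (x + 1),
    one_add_mul_eq hrel]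
  have hδ : x ^ 2 * (2 * x + 3) * ω ^ 3 = (2 * x + 3) * (x * ((x + 1) * ω - 1)) := by
    rw [← sq_mul_pow_three_eq hrel]; ring
  rw [hδ]
  linarith [mul_root_lt hx hrel]

lemma mul_root_eq_sub (hx : 0 < x) (hrel : x * (ω + ω ^ 2) = 1) :
    (x + 1) * (1 + ω) / (x + 2) * ω = 1 / x - x / (x ^ 2 * (x + 2)) := by
  field_simp
  linear_combination (x + 1) * hrel

end

theorem gamma_inequalities (i : ℕ) (hi : 2 ≤ i)
    (ω : ℝ) (hω : ω = (Real.sqrt (i * (i + 4)) - i) / (2 * i))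
    (δ : ℝ) (hδ : δ = (i : ℝ) ^ 2 * (2 * i + 3) * ω ^ 3)
    (L : ℝ) (hL : L = (2 * ((i : ℝ) + 1) + 3 * i * ω) / (i + 4))
    (γ : ℝ) (hγ : γ = δ / L) :
    γ < ((i : ℝ) + 1) * (1 + ω) / (i + 2) ∧
    1 / (i : ℝ) - γ * ω > (i : ℝ) / ((i : ℝ) ^ 2 * (i + 2)) := by
  have hi1 : (1 : ℝ) ≤ i := by exact_mod_cast one_le_two.trans hi
  have hi0 : (0 : ℝ) < i := one_pos.trans_le hi1
  have hω0 : 0 < ω := hω ▸ fibRoot_pos hi0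
  have hrel : (i : ℝ) * (ω + ω ^ 2) = 1 := hω ▸ mul_fibRoot_add_sq hi0
  have hγ_lt : γ < ((i : ℝ) + 1) * (1 + ω) / (i + 2) := by
    rw [hγ, hδ, hL]
    exact gamma_lt hi1 hω0 hrel
  refine ⟨hγ_lt, ?_⟩
  have := mul_lt_mul_of_pos_right hγ_lt hω0
  linarith [mul_root_eq_sub hi0 hrel]
end
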